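/- arXiv:1705.00084 — 5 statements merged into one kernel-verified Lean document; each statement's English description precedes it below -/
import Mathlib

section
/- Let n be even, d ≥ 3, ζ a primitive 2d-th root of unity in C. Define p : Z^{n+2} → C by p_i := ζ^{i_0 + i_2 + ⋯ + i_n} if i ∈ Ǐ (where Ǐ := { i : 0 ≤ i_e ≤ d-2 for all e and i_{2l-2} + i_{2l-1} = d-2 for all l = 1,...,n/2+1 }), and p_i := 0 otherwise. With A, B, φ as above, for all i ∈ A and j ∈ B one has p_{i+j} = 1 if i = φ(j), and p_{i+j} = 0 otherwise. -/
/-- The set `Ǐ` of integer vectors in `ℤ^{2m+2}` with entries in `[0, d-2]` whose consecutive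
pair-sums `i_{2l} + i_{2l+1}` all equal `d-2`. -/
def Icheck (m d : ℕ) : Set (Fin (2*m+2) → ℤ) :=
  {i | (∀ e, 0 ≤ i e ∧ i e ≤ (d : ℤ) - 2) ∧
    ∀ l : ℕ, (hl : l < m+1) → i ⟨2*l, by omega⟩ + i ⟨2*l+1, by omega⟩ = (d : ℤ) - 2}

/-- The sum `i_0 + i_2 + ⋯ + i_n` of the even-index entries of `i`. -/
def evenSum (m : ℕ) (i : Fin (2*m+2) → ℤ) : ℤ :=
  ∑ e ∈ Finset.univ.filter (fun e : Fin (2*m+2) => Even (e : ℕ)), i e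

/-- The set `I_N` of integer vectors with entries in `[0, d-2]` summing to `N`. -/
def Iset (m d : ℕ) (N : ℤ) : Set (Fin (2*m+2) → ℤ) :=
  {i | (∀ e, 0 ≤ i e ∧ i e ≤ (d : ℤ) - 2) ∧ ∑ e, i e = N}

/-- The map `φ` with `φ(j)_{2l} = 0` and `φ(j)_{2l+1} = d - 2 - j_{2l+1}`. -/
def phiMap (m d : ℕ) (j : Fin (2*m+2) → ℤ) : Fin (2*m+2) → ℤ :=
  fun e => if Even (e : ℕ) then 0 else (d : ℤ) - 2 - j e

/-!
On vectors vanishing at the even indices, membership in `Ǐ` only asks that every odd entry equal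
`d - 2`; for `i + j` this says exactly `i = φ(j)`. When it holds, the exponent `evenSum` of `i + j`
is `0`, so `p_{i+j} = ζ ^ 0 = 1`; otherwise `i + j ∉ Ǐ` and `p_{i+j} = 0`.
-/

section

variable {m d : ℕ}

lemma evenSum_eq_zero {k : Fin (2*m+2) → ℤ} (hk : ∀ e : Fin (2*m+2), Even (e : ℕ) → k e = 0) :
    evenSum m k = 0 :=
  Finset.sum_eq_zero fun e he => hk e (Finset.mem_filter.mp he).2

lemma mem_Icheck_iff_of_even_eq_zero (hd : 2 ≤ d) {k : Fin (2*m+2) → ℤ}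
    (hk : ∀ e : Fin (2*m+2), Even (e : ℕ) → k e = 0) :
    k ∈ Icheck m d ↔ ∀ e : Fin (2*m+2), ¬Even (e : ℕ) → k e = d - 2 := by
  have hk_even (l : ℕ) (hl : l < m + 1) : k ⟨2*l, by omega⟩ = 0 := hk _ ⟨l, two_mul l⟩
  constructor
  · rintro ⟨-, hpair⟩ e he
    obtain ⟨l, hl⟩ := Nat.not_even_iff_odd.mp he
    have hle : l < m + 1 := by omega
    have := hpair l hle
    rw [hk_even l hle, zero_add] at this
    rwa [show e = ⟨2*l+1, by omega⟩ from Fin.ext hl]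
  · intro hodd
    refine ⟨fun e => ?_, fun l hl => ?_⟩
    · by_cases he : Even (e : ℕ)
      · rw [hk e he]; omega
      · rw [hodd e he]; omega
    · have hl_odd : ¬Even (2*l+1) := by simp
      rw [hk_even l hl, hodd _ hl_odd, zero_add]

lemma eq_phiMap_iff {i j : Fin (2*m+2) → ℤ} (hi : ∀ e : Fin (2*m+2), Even (e : ℕ) → i e = 0) :
    i = phiMap m d j ↔ ∀ e : Fin (2*m+2), ¬Even (e : ℕ) → i e + j e = d - 2 := by
  rw [funext_iff]
  refine forall_congr' fun e => ?_
  by_cases he : Even (e : ℕ)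
  · simp only [phiMap, he, hi e he, if_true, not_true_eq_false, IsEmpty.forall_iff]
  · simp only [phiMap, he, if_false, not_false_eq_true, forall_const]
    omega

end

theorem stmt_4_general (m d : ℕ) (hd : 3 ≤ d) (ζ : ℂ)
    (p : (Fin (2*m+2) → ℤ) → ℂ)
    (hp1 : ∀ i ∈ Icheck m d, p i = ζ ^ (evenSum m i))
    (hp2 : ∀ i ∉ Icheck m d, p i = 0) :
    ∀ i ∈ {i | i ∈ Iset m d ((m : ℤ) * d - 2*m - 2) ∧ ∀ e : Fin (2*m+2), Even (e : ℕ) → i e = 0},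
    ∀ j ∈ {j | j ∈ Iset m d (d : ℤ) ∧ ∀ e : Fin (2*m+2), Even (e : ℕ) → j e = 0},
      p (i + j) = if i = phiMap m d j then 1 else 0 := by
  rintro i ⟨-, hi⟩ j ⟨-, hj⟩
  have hij : ∀ e : Fin (2*m+2), Even (e : ℕ) → (i + j) e = 0 := fun e he => by
    simp [hi e he, hj e he]
  have hmem : i + j ∈ Icheck m d ↔ i = phiMap m d j := by
    rw [mem_Icheck_iff_of_even_eq_zero (by omega) hij, eq_phiMap_iff hi]
    rfl
  split_ifs with h
  · rw [hp1 _ (hmem.mpr h), evenSum_eq_zero hij, zpow_zero]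
  · exact hp2 _ (mt hmem.mp h)

/-- For `ζ` a primitive `2d`-th root of unity and `p` the period function
(`p_i = ζ^{i_0+i_2+⋯+i_n}` on `Ǐ`, zero elsewhere): for all `i ∈ A` and `j ∈ B`,
`p_{i+j} = 1` if `i = φ(j)` and `p_{i+j} = 0` otherwise. -/
theorem stmt_4 (m d : ℕ) (hd : 3 ≤ d) (ζ : ℂ) (hζ : IsPrimitiveRoot ζ (2*d))
    (p : (Fin (2*m+2) → ℤ) → ℂ)
    (hp1 : ∀ i ∈ Icheck m d, p i = ζ ^ (evenSum m i))
    (hp2 : ∀ i ∉ Icheck m d, p i = 0) :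
    ∀ i ∈ {i | i ∈ Iset m d ((m : ℤ) * d - 2*m - 2) ∧ ∀ e : Fin (2*m+2), Even (e : ℕ) → i e = 0},
    ∀ j ∈ {j | j ∈ Iset m d (d : ℤ) ∧ ∀ e : Fin (2*m+2), Even (e : ℕ) → j e = 0},
      p (i + j) = if i = phiMap m d j then 1 else 0 :=
  stmt_4_general m d hd ζ p hp1 hp2
end

section
/- With the notation above, let i ∈ I_{(n/2)d-n-2} satisfy i_{2l-2} + i_{2l-1} ≤ d-2 for all l = 1, ..., n/2+1, and let j ∈ B be the unique element with j_{2l-2} = 0 and j_{2l-1} = d - 2 - i_{2l-2} - i_{2l-1}. Then for every h ∈ I_d, p_{i+h} = ζ^{i_0 + i_2 + ⋯ + i_n} · p_{φ(j)+h}. -/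
def pairSum (m : ℕ) (x : Fin (2*m+2) → ℤ) (l : Fin (m+1)) : ℤ :=
  x ⟨2*l, by omega⟩ + x ⟨2*l+1, by omega⟩

lemma zpow_add_of_nonneg₀ {G₀ : Type*} [GroupWithZero G₀] (a : G₀) {m n : ℤ}
    (hm : 0 ≤ m) (hn : 0 ≤ n) : a ^ (m + n) = a ^ m * a ^ n :=
  zpow_add' (Or.inr (by omega))

section

variable {m d : ℕ}

lemma exists_eq_even_or_odd_index (e : Fin (2*m+2)) :
    ∃ l : Fin (m+1), e = ⟨2*l, by omega⟩ ∨ e = ⟨2*l+1, by omega⟩ := by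
  refine ⟨⟨e / 2, by omega⟩, ?_⟩
  rcases Nat.mod_two_eq_zero_or_one e with h | h
  · exact .inl (Fin.ext (by simp only; omega))
  · exact .inr (Fin.ext (by simp only; omega))

lemma pairSum_add (x y : Fin (2*m+2) → ℤ) (l : Fin (m+1)) :
    pairSum m (x + y) l = pairSum m x l + pairSum m y l := by
  simp only [pairSum, Pi.add_apply]
  ring

lemma mem_Icheck_iff_of_nonneg {x : Fin (2*m+2) → ℤ} (hx : 0 ≤ x) :
    x ∈ Icheck m d ↔ ∀ l, pairSum m x l = (d : ℤ) - 2 := by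
  refine ⟨fun h l => h.2 l l.isLt, fun h => ⟨fun e => ⟨hx e, ?_⟩, fun l hl => h ⟨l, hl⟩⟩⟩
  obtain ⟨l, rfl | rfl⟩ := exists_eq_even_or_odd_index e
  all_goals
    have hpair := h l
    have : 0 ≤ x ⟨2*l, by omega⟩ := hx _
    have : 0 ≤ x ⟨2*l+1, by omega⟩ := hx _
    simp only [pairSum] at hpair
    omega

lemma mem_Icheck_congr {x y : Fin (2*m+2) → ℤ} (hx : 0 ≤ x) (hy : 0 ≤ y)
    (hxy : ∀ l, pairSum m x l = pairSum m y l) : x ∈ Icheck m d ↔ y ∈ Icheck m d := by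
  simp only [mem_Icheck_iff_of_nonneg hx, mem_Icheck_iff_of_nonneg hy, hxy]

lemma pairSum_phiMap (j : Fin (2*m+2) → ℤ) (l : Fin (m+1)) :
    pairSum m (phiMap m d j) l = (d : ℤ) - 2 - j ⟨2*l+1, by omega⟩ := by
  simp [pairSum, phiMap]

lemma phiMap_nonneg {j : Fin (2*m+2) → ℤ} (hj : ∀ l : Fin (m+1), j ⟨2*l+1, by omega⟩ ≤ d - 2) :
    0 ≤ phiMap m d j := by
  intro e
  obtain ⟨l, rfl | rfl⟩ := exists_eq_even_or_odd_index e
  · simp [phiMap]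
  · simpa [phiMap, Nat.even_add_one] using hj l

lemma evenSum_add (x y : Fin (2*m+2) → ℤ) : evenSum m (x + y) = evenSum m x + evenSum m y :=
  Finset.sum_add_distrib

lemma evenSum_nonneg {x : Fin (2*m+2) → ℤ} (hx : 0 ≤ x) : 0 ≤ evenSum m x :=
  Finset.sum_nonneg fun e _ => hx e

lemma evenSum_phiMap (j : Fin (2*m+2) → ℤ) : evenSum m (phiMap m d j) = 0 :=
  Finset.sum_eq_zero fun _ he => if_pos (Finset.mem_filter.mp he).2

lemma eq_zpow_mul_of_pairSum_eq {G₀ : Type*} [GroupWithZero G₀] {ζ : G₀}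
    {p : (Fin (2*m+2) → ℤ) → G₀}
    (hp1 : ∀ i ∈ Icheck m d, p i = ζ ^ (evenSum m i)) (hp2 : ∀ i ∉ Icheck m d, p i = 0)
    {x y : Fin (2*m+2) → ℤ} (hx : 0 ≤ x) (hy : 0 ≤ y)
    (hxy : ∀ l, pairSum m x l = pairSum m y l) {a : ℤ} (ha : 0 ≤ a)
    (hs : evenSum m x = a + evenSum m y) : p x = ζ ^ a * p y := by
  by_cases hmem : x ∈ Icheck m d
  · rw [hp1 x hmem, hp1 y ((mem_Icheck_congr hx hy hxy).mp hmem), hs,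
      zpow_add_of_nonneg₀ ζ ha (evenSum_nonneg hy)]
  · rw [hp2 x hmem, hp2 y (mt (mem_Icheck_congr hx hy hxy).mpr hmem), mul_zero]

end

/-- If `i ∈ I_{(n/2)d-n-2}` has all pair-sums `≤ d-2` and `j ∈ B` is the element with
`j_{2l} = 0`, `j_{2l+1} = d-2-i_{2l}-i_{2l+1}`, then `p_{i+h} = ζ^{i_0+i_2+⋯+i_n} · p_{φ(j)+h}`
for every `h ∈ I_d`. -/
theorem stmt_6 (m d : ℕ) (ζ : ℂ)
    (p : (Fin (2*m+2) → ℤ) → ℂ)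
    (hp1 : ∀ i ∈ Icheck m d, p i = ζ ^ (evenSum m i))
    (hp2 : ∀ i ∉ Icheck m d, p i = 0)
    (i : Fin (2*m+2) → ℤ) (hi : i ∈ Iset m d ((m : ℤ) * d - 2*m - 2))
    (j : Fin (2*m+2) → ℤ)
    (hj : ∀ l : ℕ, ∀ hl : l < m+1,
      j ⟨2*l, by omega⟩ = 0 ∧
      j ⟨2*l+1, by omega⟩ = (d : ℤ) - 2 - i ⟨2*l, by omega⟩ - i ⟨2*l+1, by omega⟩) :
    ∀ h ∈ Iset m d (d : ℤ), p (i + h) = ζ ^ (evenSum m i) * p (phiMap m d j + h) := by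
  intro h hh
  have hi0 : 0 ≤ i := fun e => (hi.1 e).1
  have hh0 : 0 ≤ h := fun e => (hh.1 e).1
  have hjodd (l : Fin (m+1)) := (hj l l.isLt).2
  have hφ : ∀ l, pairSum m (phiMap m d j) l = pairSum m i l := fun l => by
    rw [pairSum_phiMap, hjodd, pairSum]
    ring
  have hφ0 : 0 ≤ phiMap m d j := phiMap_nonneg fun l => by
    have : 0 ≤ i ⟨2*l, by omega⟩ := hi0 _
    have : 0 ≤ i ⟨2*l+1, by omega⟩ := hi0 _
    linarith [hjodd l]
  refine eq_zpow_mul_of_pairSum_eq hp1 hp2 (add_nonneg hi0 hh0) (add_nonneg hφ0 hh0)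
    (fun l => by rw [pairSum_add, pairSum_add, hφ]) (evenSum_nonneg hi0) ?_
  rw [evenSum_add, evenSum_add, evenSum_phiMap, zero_add]
end

section
/- Let n be even and d ≥ 3, and let ζ be a primitive 2d-th root of unity. Define the matrix M with rows indexed by I_{(n/2)d-n-2} and columns indexed by I_d, with entry M_{i,j} = p_{i+j}, where p_i := ζ^{i_0+i_2+⋯+i_n} if 0 ≤ i_e ≤ d-2 for all e and i_{2l-2}+i_{2l-1} = d-2 for all l = 1,...,n/2+1, and p_i := 0 otherwise. Then rank(M) = binom(n/2 + d, d) − (n/2 + 1)^2. -/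
/-! For `h ≥ 0`, the sum `i + h` lies in `Ǐ` exactly when the pair sums `h_{2l} + h_{2l+1}`
equal `d - 2 - (i_{2l} + i_{2l+1})` for all `l`. So the row of `i` is `ζ ^ evenSum i` times the
vector `pairRow t` supported on the columns whose vector of pair sums is
`t = d - 2 - pairSum i`, and it vanishes unless `t ≥ 0`. These vectors have disjoint nonempty
supports, so the rank is the number of admissible `t`: compositions of `d` into `m + 1` parts of
size at most `d - 2`. Since `d ≥ 3`, a composition of `d` has at most one part `≥ d - 1`, and
removing `d - 1` from it leaves a composition of `1`; this gives `(m + 1) ^ 2` exceptions among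
the `binom(m + d, d)` compositions. -/

open Finset

theorem linearIndependent_of_apply_ne_zero_of_apply_eq_zero {R X ι : Type*} [Ring R]
    [IsDomain R] [DecidableEq ι] (v : ι → X → R) (x : ι → X) (hx : ∀ i, v i (x i) ≠ 0)
    (hvx : ∀ i j, i ≠ j → v i (x j) = 0) : LinearIndependent R v := by
  have hdiag : LinearMap.funLeft R R x ∘ v = fun i => Pi.single i (v i (x i)) := by
    funext i j
    by_cases hij : i = j
    · subst hij
      simp [LinearMap.funLeft]
    · simp [LinearMap.funLeft, hvx i j hij, Ne.symm hij]
  exact .of_comp (LinearMap.funLeft R R x) (hdiag ▸ Pi.linearIndependent_single_of_ne_zero hx)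

namespace Finset

variable {ι : Type*} [Fintype ι] [DecidableEq ι]

theorem card_piAntidiag_univ (n : ℕ) :
    #(piAntidiag (univ : Finset ι) n) = (Fintype.card ι + n - 1).choose n := by
  rw [← map_sym_eq_piAntidiag, card_map, sym_univ, card_univ, Sym.card_sym_eq_choose]

theorem filter_le_apply_piAntidiag_univ (a : ι) (n k : ℕ) :
    {f ∈ piAntidiag (univ : Finset ι) (n + k) | k ≤ f a}
      = (piAntidiag univ n).map (addRightEmbedding (Pi.single a k)) := by
  ext f
  simp only [mem_filter, mem_piAntidiag, mem_univ, implies_true, and_true, mem_map,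
    addRightEmbedding_apply]
  constructor
  · rintro ⟨hsum, hk⟩
    have hf : f = (f - Pi.single a k) + Pi.single a k := by
      funext i
      by_cases hi : i = a
      · subst hi
        simp [Nat.sub_add_cancel hk]
      · simp [hi]
    refine ⟨f - Pi.single a k, ?_, hf.symm⟩
    rw [hf] at hsum
    simpa [sum_add_distrib] using hsum
  · rintro ⟨g, hg, rfl⟩
    simp [sum_add_distrib, hg]

/-- As `k ≤ b`, a composition of `k + (b + 1)` has at most one part exceeding `b`, and removing
`b + 1` from that part leaves a composition of `k`. -/
theorem card_filter_forall_le_piAntidiag_univ_add {b k : ℕ} (hk : k ≤ b) :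
    #{f ∈ piAntidiag (univ : Finset ι) (k + (b + 1)) | ∀ i, f i ≤ b}
      + Fintype.card ι * #(piAntidiag (univ : Finset ι) k)
      = #(piAntidiag (univ : Finset ι) (k + (b + 1))) := by
  set A := piAntidiag (univ : Finset ι) (k + (b + 1))
  have hbad : {f ∈ A | ¬ ∀ i, f i ≤ b} = univ.biUnion fun a => {f ∈ A | b + 1 ≤ f a} := by
    ext f
    simp [not_forall]
  have hdisj : ((univ : Finset ι) : Set ι).PairwiseDisjoint fun a => {f ∈ A | b + 1 ≤ f a} := by
    intro a _ a' _ haa'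
    refine disjoint_filter.2 fun f hf ha ha' => ?_
    have hsum := (mem_piAntidiag.1 hf).1
    have : f a + f a' ≤ univ.sum f :=
      add_le_sum (fun _ _ => Nat.zero_le _) (mem_univ a) (mem_univ a') haa'
    omega
  rw [← card_filter_add_card_filter_not (s := A) (fun f => ∀ i, f i ≤ b), hbad,
    card_biUnion hdisj,
    sum_congr rfl fun a _ => congrArg card (filter_le_apply_piAntidiag_univ a k (b + 1))]
  simp

end Finset

namespace FermatLinearCycle

variable {m d : ℕ}

def pairSum (i : Fin (2*m+2) → ℤ) (l : Fin (m+1)) : ℤ :=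
  i ⟨2*l, by omega⟩ + i ⟨2*l+1, by omega⟩

theorem pairSum_add (i j : Fin (2*m+2) → ℤ) : pairSum (i + j) = pairSum i + pairSum j := by
  funext l
  simp only [pairSum, Pi.add_apply]
  ring

theorem sum_pairSum (i : Fin (2*m+2) → ℤ) : ∑ l, pairSum i l = ∑ e, i e := by
  rw [← (finProdFinEquiv.trans (finCongr (by ring) : Fin ((m+1)*2) ≃ Fin (2*m+2))).sum_comp,
    Fintype.sum_prod_type]
  refine sum_congr rfl fun l _ => ?_
  simp only [pairSum, Fin.sum_univ_two]
  congr 2 <;> ext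
  · simp
  · simp
    omega

theorem pairSum_nonneg {i : Fin (2*m+2) → ℤ} (hi : 0 ≤ i) : 0 ≤ pairSum i :=
  fun _ => add_nonneg (hi _) (hi _)

theorem exists_le_pairSum {i : Fin (2*m+2) → ℤ} (hi : 0 ≤ i) (e : Fin (2*m+2)) :
    ∃ l, i e ≤ pairSum i l := by
  refine ⟨⟨e / 2, by omega⟩, ?_⟩
  have h0 := hi ⟨2 * (e / 2), by omega⟩
  have h1 := hi ⟨2 * (e / 2) + 1, by omega⟩
  obtain he | he : (⟨2 * (e / 2), by omega⟩ : Fin (2*m+2)) = e ∨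
      (⟨2 * (e / 2) + 1, by omega⟩ : Fin (2*m+2)) = e := by
    simp only [Fin.ext_iff]
    omega
  · exact (congrArg i he).symm.le.trans (le_add_of_nonneg_right h1)
  · exact (congrArg i he).symm.le.trans (le_add_of_nonneg_left h0)

theorem mem_Icheck_iff {i : Fin (2*m+2) → ℤ} (hi : 0 ≤ i) :
    i ∈ Icheck m d ↔ pairSum i = fun _ => (d : ℤ) - 2 := by
  constructor
  · rintro ⟨-, h⟩
    funext l
    exact h l l.2
  · intro h
    refine ⟨fun e => ⟨hi e, ?_⟩, fun l hl => congrFun h ⟨l, hl⟩⟩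
    obtain ⟨l, hl⟩ := exists_le_pairSum hi e
    exact hl.trans (congrFun h l).le

theorem nonneg_of_mem_Iset {N : ℤ} {i : Fin (2*m+2) → ℤ} (hi : i ∈ Iset m d N) : 0 ≤ i :=
  fun e => (hi.1 e).1

theorem evenSum_add (i j : Fin (2*m+2) → ℤ) : evenSum m (i + j) = evenSum m i + evenSum m j :=
  sum_add_distrib

def evenLift (t : Fin (m+1) → ℤ) (e : Fin (2*m+2)) : ℤ :=
  if (e : ℕ) % 2 = 0 then t ⟨e / 2, by omega⟩ else 0

theorem pairSum_evenLift (t : Fin (m+1) → ℤ) : pairSum (evenLift t) = t := by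
  funext l
  have h0 : 2 * (l : ℕ) % 2 = 0 := by omega
  have h1 : (2 * (l : ℕ) + 1) % 2 = 1 := by omega
  have h2 : 2 * (l : ℕ) / 2 = l := by omega
  simp [pairSum, evenLift, h0, h1, h2]

theorem evenLift_mem_Iset {t : Fin (m+1) → ℤ} (ht : ∀ l, 0 ≤ t l ∧ t l ≤ (d : ℤ) - 2) :
    evenLift t ∈ Iset m d (∑ l, t l) := by
  refine ⟨fun e => ?_, by rw [← sum_pairSum, pairSum_evenLift]⟩
  have h0 := ht 0
  unfold evenLift
  split_ifs
  · exact ht _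
  · omega

def pairDefect (d : ℕ) (i : Fin (2*m+2) → ℤ) (l : Fin (m+1)) : ℤ := (d : ℤ) - 2 - pairSum i l

theorem sum_pairDefect {M : ℤ} {i : Fin (2*m+2) → ℤ} (hi : i ∈ Iset m d M) :
    ∑ l, pairDefect d i l = (m + 1) * ((d : ℤ) - 2) - M := by
  simp only [pairDefect, sum_sub_distrib, sum_pairSum, hi.2, sum_const, card_univ,
    Fintype.card_fin, nsmul_eq_mul]
  push_cast
  ring

noncomputable def pairRow (d : ℕ) (N : ℤ) (ζ : ℂ) (t : Fin (m+1) → ℤ) (h : Iset m d N) : ℂ :=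
  if pairSum h.1 = t then ζ ^ evenSum m h.1 else 0

variable {ζ : ℂ} {p : (Fin (2*m+2) → ℤ) → ℂ}

theorem row_eq_smul_pairRow (hζ : ζ ≠ 0) (hp1 : ∀ i ∈ Icheck m d, p i = ζ ^ evenSum m i)
    (hp2 : ∀ i ∉ Icheck m d, p i = 0) {N : ℤ} {i : Fin (2*m+2) → ℤ} (hi : 0 ≤ i) :
    (fun h : Iset m d N => p (i + h.1)) = ζ ^ evenSum m i • pairRow d N ζ (pairDefect d i) := by
  funext h
  have hmem : i + h.1 ∈ Icheck m d ↔ pairSum h.1 = pairDefect d i := by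
    rw [mem_Icheck_iff (add_nonneg hi (nonneg_of_mem_Iset h.2)), pairSum_add, funext_iff,
      funext_iff]
    refine forall_congr' fun l => ?_
    simp only [Pi.add_apply, pairDefect]
    constructor <;> intro <;> linarith
  simp only [Pi.smul_apply, pairRow, smul_eq_mul]
  split_ifs with hc
  · rw [hp1 _ (hmem.2 hc), evenSum_add, zpow_add₀ hζ]
  · rw [hp2 _ (mt hmem.1 hc), mul_zero]

theorem pairRow_eq_zero {N : ℤ} {t : Fin (m+1) → ℤ} (ht : ∃ l, t l < 0) :
    pairRow d N ζ t = 0 := by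
  obtain ⟨l, hl⟩ := ht
  funext h
  have hne : pairSum h.1 ≠ t := fun heq =>
    (congrFun heq l ▸ hl).not_ge (pairSum_nonneg (nonneg_of_mem_Iset h.2) l)
  simp [pairRow, hne]

def boundedCompositions (m d N : ℕ) : Finset (Fin (m+1) → ℕ) :=
  {s ∈ piAntidiag univ N | ∀ l, s l ≤ d - 2}

theorem mem_boundedCompositions_iff {N : ℕ} {s : Fin (m+1) → ℕ} :
    s ∈ boundedCompositions m d N ↔ ∑ l, s l = N ∧ ∀ l, s l ≤ d - 2 := by
  simp [boundedCompositions]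

theorem card_boundedCompositions (hd : 3 ≤ d) :
    #(boundedCompositions m d d) + (m + 1) ^ 2 = (m + d).choose d := by
  have h := card_filter_forall_le_piAntidiag_univ_add (ι := Fin (m+1)) (k := 1) (b := d - 2)
    (by omega)
  rw [show 1 + (d - 2 + 1) = d by omega, card_piAntidiag_univ, card_piAntidiag_univ] at h
  simp only [Fintype.card_fin, add_tsub_cancel_right, Nat.choose_one_right] at h
  rw [show m + 1 + d - 1 = m + d by omega] at h
  rw [boundedCompositions, sq]
  convert h

theorem evenLift_mem_Iset_of_mem_boundedCompositions (hd : 2 ≤ d) {N : ℕ} {s : Fin (m+1) → ℕ}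
    (hs : s ∈ boundedCompositions m d N) : evenLift (fun l => (s l : ℤ)) ∈ Iset m d N := by
  rw [mem_boundedCompositions_iff] at hs
  convert evenLift_mem_Iset (d := d) fun l => ⟨Nat.cast_nonneg (s l), by have := hs.2 l; omega⟩
  rw [← hs.1, Nat.cast_sum]

theorem linearIndependent_pairRow (hd : 2 ≤ d) (hζ : ζ ≠ 0) (N : ℕ) :
    LinearIndependent ℂ fun s : boundedCompositions m d N =>
      pairRow d N ζ (fun l => (s.1 l : ℤ)) := by
  refine linearIndependent_of_apply_ne_zero_of_apply_eq_zero _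
    (fun s => ⟨_, evenLift_mem_Iset_of_mem_boundedCompositions hd s.2⟩)
    (fun s => by simp [pairRow, pairSum_evenLift, zpow_ne_zero _ hζ]) fun s s' hss' => ?_
  have hne : (fun l => (s'.1 l : ℤ)) ≠ fun l => (s.1 l : ℤ) := fun h =>
    hss' (Subtype.ext (funext fun l => Nat.cast_injective (congrFun h l)).symm)
  simp [pairRow, pairSum_evenLift, hne]

theorem row_mem_span_pairRow (hζ : ζ ≠ 0) (hp1 : ∀ i ∈ Icheck m d, p i = ζ ^ evenSum m i)
    (hp2 : ∀ i ∉ Icheck m d, p i = 0) {M : ℤ} {N : ℕ} (hMN : M + N = (m + 1) * ((d : ℤ) - 2))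
    {i : Fin (2*m+2) → ℤ} (hi : i ∈ Iset m d M) :
    (fun h : Iset m d N => p (i + h.1)) ∈ Submodule.span ℂ
      (Set.range fun s : boundedCompositions m d N => pairRow d N ζ (fun l => (s.1 l : ℤ))) := by
  rw [row_eq_smul_pairRow hζ hp1 hp2 (nonneg_of_mem_Iset hi)]
  refine Submodule.smul_mem _ _ ?_
  by_cases hneg : ∃ l, pairDefect d i l < 0
  · rw [pairRow_eq_zero hneg]
    exact Submodule.zero_mem _
  push Not at hneg
  have hcast : (fun l => ((pairDefect d i l).toNat : ℤ)) = pairDefect d i :=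
    funext fun l => Int.toNat_of_nonneg (hneg l)
  have hmem : (fun l => (pairDefect d i l).toNat) ∈ boundedCompositions m d N := by
    refine mem_boundedCompositions_iff.2 ⟨?_, fun l => ?_⟩
    · have hsum : ((∑ l, (pairDefect d i l).toNat : ℕ) : ℤ) = N := by
        rw [Nat.cast_sum, sum_congr rfl fun l _ => Int.toNat_of_nonneg (hneg l),
          sum_pairDefect hi]
        linarith
      exact_mod_cast hsum
    · have : 0 ≤ pairSum i l := pairSum_nonneg (nonneg_of_mem_Iset hi) l
      simp only [pairDefect]
      omega
  exact Submodule.subset_span ⟨⟨_, hmem⟩, congrArg _ hcast⟩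

theorem pairRow_mem_span_rows (hd : 2 ≤ d) (hζ : ζ ≠ 0) (hp1 : ∀ i ∈ Icheck m d, p i = ζ ^ evenSum m i)
    (hp2 : ∀ i ∉ Icheck m d, p i = 0) {M : ℤ} {N : ℕ} (hMN : M + N = (m + 1) * ((d : ℤ) - 2))
    {s : Fin (m+1) → ℕ} (hs : s ∈ boundedCompositions m d N) :
    pairRow d N ζ (fun l => (s l : ℤ)) ∈ Submodule.span ℂ
      (Set.range fun i : Iset m d M => fun h : Iset m d N => p (i.1 + h.1)) := by
  obtain ⟨hsum, hle⟩ := mem_boundedCompositions_iff.1 hs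
  set i := evenLift fun l => (d : ℤ) - 2 - s l
  have hi : i ∈ Iset m d M := by
    convert evenLift_mem_Iset (d := d) fun l => (⟨by have := hle l; omega, by omega⟩ :
      0 ≤ (d : ℤ) - 2 - s l ∧ (d : ℤ) - 2 - s l ≤ (d : ℤ) - 2)
    rw [sum_sub_distrib, ← Nat.cast_sum, hsum]
    simp only [sum_const, card_univ, Fintype.card_fin, nsmul_eq_mul]
    push_cast
    linarith
  have hdefect : pairDefect d i = fun l => (s l : ℤ) := by
    funext l
    simp [pairDefect, i, pairSum_evenLift]
  have hrow := row_eq_smul_pairRow (N := N) hζ hp1 hp2 (nonneg_of_mem_Iset hi)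
  rw [hdefect] at hrow
  have hpairRow : pairRow d N ζ (fun l => (s l : ℤ))
      = ζ ^ (-evenSum m i) • fun h : Iset m d N => p (i + h.1) := by
    rw [hrow, smul_smul, ← zpow_add₀ hζ, neg_add_cancel, zpow_zero, one_smul]
  rw [hpairRow]
  exact Submodule.smul_mem _ _ (Submodule.subset_span ⟨⟨i, hi⟩, rfl⟩)

theorem finrank_span_rows (hd : 2 ≤ d) (hζ : ζ ≠ 0)
    (hp1 : ∀ i ∈ Icheck m d, p i = ζ ^ evenSum m i) (hp2 : ∀ i ∉ Icheck m d, p i = 0)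
    {M : ℤ} {N : ℕ} (hMN : M + N = (m + 1) * ((d : ℤ) - 2)) :
    Module.finrank ℂ (Submodule.span ℂ
      (Set.range fun i : Iset m d M => fun h : Iset m d N => p (i.1 + h.1)))
      = #(boundedCompositions m d N) := by
  have hspan : Submodule.span ℂ
      (Set.range fun i : Iset m d M => fun h : Iset m d N => p (i.1 + h.1))
      = Submodule.span ℂ (Set.range fun s : boundedCompositions m d N =>
          pairRow d N ζ (fun l => (s.1 l : ℤ))) := by
    apply le_antisymm <;> rw [Submodule.span_le]
    · rintro _ ⟨i, rfl⟩
      exact row_mem_span_pairRow hζ hp1 hp2 hMN i.2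
    · rintro _ ⟨s, rfl⟩
      exact pairRow_mem_span_rows hd hζ hp1 hp2 hMN s.2
  rw [hspan, finrank_span_eq_card (linearIndependent_pairRow hd hζ N), Fintype.card_coe]

end FermatLinearCycle

/-- The rank (dimension of the row space) of the period matrix `M = [p_{i+j}]`, with rows
indexed by `I_{(n/2)d-n-2}` and columns by `I_d`, equals `binom(n/2+d, d) - (n/2+1)^2`. -/
theorem stmt_7 (m d : ℕ) (hd : 3 ≤ d) (ζ : ℂ) (hζ : IsPrimitiveRoot ζ (2*d))
    (p : (Fin (2*m+2) → ℤ) → ℂ)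
    (hp1 : ∀ i ∈ Icheck m d, p i = ζ ^ (evenSum m i))
    (hp2 : ∀ i ∉ Icheck m d, p i = 0) :
    (Module.finrank ℂ (Submodule.span ℂ (Set.range
        (fun i : ↥(Iset m d ((m : ℤ) * d - 2*m - 2)) =>
          (fun h : ↥(Iset m d (d : ℤ)) => p (i.1 + h.1))))) : ℤ) =
      (Nat.choose (m + d) d : ℤ) - (m + 1)^2 := by
  have hζ0 : ζ ≠ 0 := hζ.ne_zero (by omega)
  rw [FermatLinearCycle.finrank_span_rows (by omega) hζ0 hp1 hp2 (N := d) (by ring)]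
  exact eq_sub_of_add_eq (by exact_mod_cast FermatLinearCycle.card_boundedCompositions hd)
end

section
/- Let n be even and consider the (n+1)-form Ω := Σ_{i=0}^{n+1} (-1)^i x_i dx_0 ∧ ⋯ ∧ \widehat{dx_i} ∧ ⋯ ∧ dx_{n+1} on C^{n+2} with coordinates x_0, ..., x_{n+1}. For a strictly increasing multi-index j = (j_0, ..., j_l), let Ω_j := ι_{∂/∂x_{j_0}} ∘ ⋯ ∘ ι_{∂/∂x_{j_l}} Ω be the iterated contraction. Let φ: C^{n/2+1} → C^{n+2} be the linear map sending (y_1, ..., y_{n/2+1}) to (ζ y_1, y_1, ζ y_2, y_2, ..., ζ y_{n/2+1}, y_{n/2+1}) for a fixed nonzero ζ ∈ C. If j has length |j| = n/2 (i.e., l = n/2, so n/2+1 indices) and there exists l' ∈ {1, ..., n/2+1} with both 2l'-2 and 2l'-1 among the entries of j, then the pullback φ*Ω_j = 0. -/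
/-!
Since `j` hits both `2t` and `2t+1`, the map `k ↦ j_k / 2 : Fin (m+1) → Fin (m+1)` is not
injective, hence not surjective: some pair `{2s, 2s+1}` is avoided by `j`. The vector
`v = e_{2s} - ζ e_{2s+1}` is then orthogonal to every `φ(z)` (whose entries at `2s, 2s+1` are
`ζ z_s, z_s`) and to every `e_{j_i}`, i.e. to every row of the matrix, so its determinant vanishes.
-/

/-- The linear map `φ : ℂ^{m+1} → ℂ^{2m+2}`,
`(y_1, …, y_{m+1}) ↦ (ζ y_1, y_1, ζ y_2, y_2, …, ζ y_{m+1}, y_{m+1})`. -/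
def phiLin (m : ℕ) (ζ : ℂ) (y : Fin (m+1) → ℂ) : Fin (2*m+2) → ℂ :=
  fun e => (if Even (e : ℕ) then ζ else 1) * y ⟨(e : ℕ)/2, by have := e.isLt; omega⟩

/-- The square matrix whose determinant computes the value of the pulled-back contracted
form `φ*Ω_j` at the point `y` on the vectors `w_1, …, w_m`: its rows are `φ(y)`, then the
standard basis vectors `e_{j_m}, …, e_{j_0}` (the order produced by the iterated contraction
`ι_{∂x_{j_0}} ∘ ⋯ ∘ ι_{∂x_{j_m}}` of `Ω = Σ (-1)^i x_i dx_0 ∧ ⋯ ∧ \widehat{dx_i} ∧ ⋯`,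
whose value at `x` on `(v_1, …, v_{n+1})` is `det(x, v_1, …, v_{n+1})`), then
`φ(w_1), …, φ(w_m)`. -/
def bigRows (m : ℕ) (ζ : ℂ) (j : Fin (m+1) → Fin (2*m+2)) (y : Fin (m+1) → ℂ)
    (w : Fin m → Fin (m+1) → ℂ) : Matrix (Fin (2*m+2)) (Fin (2*m+2)) ℂ :=
  Matrix.of (fun k => if hk : (k : ℕ) = 0 then phiLin m ζ y
    else if hk2 : (k : ℕ) < m + 2 then
      Pi.single (j ⟨m + 1 - (k : ℕ), by omega⟩) (1 : ℂ)
    else phiLin m ζ (w ⟨(k : ℕ) - (m + 2), by have := k.isLt; omega⟩))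

open Matrix

lemma exists_forall_div_two_ne {n : ℕ} (j : Fin n → Fin (2 * n)) {a b : Fin n} (hab : a ≠ b)
    (h : (j a : ℕ) / 2 = (j b : ℕ) / 2) : ∃ s : Fin n, ∀ i, (j i : ℕ) / 2 ≠ s := by
  let half : Fin n → Fin n := fun i => ⟨(j i : ℕ) / 2, by omega⟩
  have not_inj : ¬ Function.Injective half := fun hinj => hab (hinj (Fin.ext h))
  obtain ⟨s, hs⟩ : ∃ s, ∀ i, half i ≠ s := by
    simpa [Function.Surjective] using mt Finite.injective_iff_surjective.mpr not_inj
  exact ⟨s, fun i he => hs i (Fin.ext he)⟩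

lemma phiLin_apply_of_even (m : ℕ) (ζ : ℂ) (z : Fin (m+1) → ℂ) (s : Fin (m+1))
    (e : Fin (2*m+2)) (he : (e : ℕ) = 2 * s) : phiLin m ζ z e = ζ * z s := by
  rw [phiLin, if_pos ⟨s, by omega⟩]
  exact congrArg _ (congrArg z (Fin.ext (by simp only [he]; omega)))

lemma phiLin_apply_of_odd (m : ℕ) (ζ : ℂ) (z : Fin (m+1) → ℂ) (s : Fin (m+1))
    (e : Fin (2*m+2)) (he : (e : ℕ) = 2 * s + 1) : phiLin m ζ z e = z s := by
  rw [phiLin, if_neg (by rw [he]; exact Nat.not_even_iff_odd.mpr ⟨s, rfl⟩), one_mul]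
  exact congrArg z (Fin.ext (by simp only [he]; omega))

lemma bigRows_row_cases (m : ℕ) (ζ : ℂ) (j : Fin (m+1) → Fin (2*m+2)) (y : Fin (m+1) → ℂ)
    (w : Fin m → Fin (m+1) → ℂ) (k : Fin (2*m+2)) :
    (∃ z, bigRows m ζ j y w k = phiLin m ζ z) ∨ ∃ i, bigRows m ζ j y w k = Pi.single (j i) 1 := by
  by_cases h0 : (k : ℕ) = 0
  · exact .inl ⟨y, dif_pos h0⟩
  by_cases h1 : (k : ℕ) < m + 2
  · exact .inr ⟨_, (dif_neg h0).trans (dif_pos h1)⟩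
  · exact .inl ⟨_, (dif_neg h0).trans (dif_neg h1)⟩

def pairVec (m : ℕ) (ζ : ℂ) (s : Fin (m+1)) : Fin (2*m+2) → ℂ :=
  Pi.single ⟨2 * s, by omega⟩ 1 + Pi.single ⟨2 * s + 1, by omega⟩ (-ζ)

lemma pairVec_ne_zero (m : ℕ) (ζ : ℂ) (s : Fin (m+1)) : pairVec m ζ s ≠ 0 := by
  intro h
  have h0 := congrFun h ⟨2 * s, by omega⟩
  rw [pairVec, Pi.add_apply, Pi.single_eq_same, Pi.single_eq_of_ne (by simp)] at h0
  simp at h0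

lemma pairVec_apply_of_div_two_ne (m : ℕ) (ζ : ℂ) (s : Fin (m+1)) (e : Fin (2*m+2))
    (he : (e : ℕ) / 2 ≠ s) : pairVec m ζ s e = 0 := by
  rw [pairVec, Pi.add_apply, Pi.single_eq_of_ne, Pi.single_eq_of_ne, add_zero] <;>
    · rintro rfl
      simp only at he
      omega

lemma phiLin_dotProduct_pairVec (m : ℕ) (ζ : ℂ) (z : Fin (m+1) → ℂ) (s : Fin (m+1)) :
    phiLin m ζ z ⬝ᵥ pairVec m ζ s = 0 := by
  rw [pairVec, dotProduct_add, dotProduct_single, dotProduct_single,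
    phiLin_apply_of_even m ζ z s _ rfl, phiLin_apply_of_odd m ζ z s _ rfl]
  ring

theorem stmt_15_general (m : ℕ) (ζ : ℂ) (j : Fin (m+1) → Fin (2*m+2))
    (hex : ∃ t : ℕ, t < m + 1 ∧ (∃ a, (j a : ℕ) = 2*t) ∧ (∃ b, (j b : ℕ) = 2*t+1)) :
    ∀ (y : Fin (m+1) → ℂ) (w : Fin m → Fin (m+1) → ℂ),
      (bigRows m ζ j y w).det = 0 := by
  intro y w
  obtain ⟨t, -, ⟨a, ha⟩, ⟨b, hb⟩⟩ := hex
  obtain ⟨s, hs⟩ := exists_forall_div_two_ne j (a := a) (b := b) (by rintro rfl; omega)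
    (by omega)
  rw [← exists_mulVec_eq_zero_iff]
  refine ⟨pairVec m ζ s, pairVec_ne_zero m ζ s, funext fun k => ?_⟩
  rcases bigRows_row_cases m ζ j y w k with ⟨z, hz⟩ | ⟨i, hi⟩
  · rw [mulVec, hz, phiLin_dotProduct_pairVec, Pi.zero_apply]
  · rw [mulVec, hi, single_dotProduct, pairVec_apply_of_div_two_ne m ζ s _ (hs i), mul_zero,
      Pi.zero_apply]

/-- If the strictly increasing multi-index `j` of length `n/2` (i.e. `n/2 + 1` indices,
`n = 2m`) contains both elements `2t` and `2t+1` of some pair, then the pullback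
`φ*Ω_j` vanishes identically. -/
theorem stmt_15 (m : ℕ) (ζ : ℂ) (hζ : ζ ≠ 0) (j : Fin (m+1) → Fin (2*m+2))
    (hj : StrictMono j)
    (hex : ∃ t : ℕ, t < m + 1 ∧ (∃ a, (j a : ℕ) = 2*t) ∧ (∃ b, (j b : ℕ) = 2*t+1)) :
    ∀ (y : Fin (m+1) → ℂ) (w : Fin m → Fin (m+1) → ℂ),
      (bigRows m ζ j y w).det = 0 :=
  stmt_15_general m ζ j hex
end

section
/- Let n be even, d ≥ 3, m ≥ 1, and let ζ be a primitive 2d-th root of unity. Define two period vectors over the index set Ǐ := { i ∈ Z^{n+2} : 0 ≤ i_e ≤ d-2, i_{2l-2}+i_{2l-1} = d-2 ∀ l = 1,...,n/2+1 }: q_i := ζ^{i_0+i_2+⋯+i_n} and q'_i := ζ^{Σ_{e=0}^{m}(i_{2e}+1) + 3·Σ_{e=m+1}^{n/2}(i_{2e}+1)} (extended by zero outside Ǐ). If m ≤ n/2 - 1 and d ≥ 3, then q and q' are not proportional, i.e., there is no constant c ∈ C with q'_i = c · q_i for all i. -/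
section

variable {m : ℕ}

def evenIdx (l : Fin (m+1)) : Fin (2*m+2) := ⟨2*l, by omega⟩

def oddIdx (l : Fin (m+1)) : Fin (2*m+2) := ⟨2*l+1, by omega⟩

def shiftPair (i : Fin (2*m+2) → ℤ) (l : Fin (m+1)) : Fin (2*m+2) → ℤ :=
  i + Pi.single (evenIdx l) 1 - Pi.single (oddIdx l) 1

theorem evenIdx_ne_oddIdx (l : Fin (m+1)) : evenIdx l ≠ oddIdx l := by
  simp [evenIdx, oddIdx, Fin.ext_iff]

theorem shiftPair_apply (i : Fin (2*m+2) → ℤ) (l : Fin (m+1)) (e : Fin (2*m+2)) :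
    shiftPair i l e =
      i e + (if e = evenIdx l then 1 else 0) - (if e = oddIdx l then 1 else 0) := by
  simp [shiftPair, Pi.single_apply]

theorem shiftPair_evenIdx (i : Fin (2*m+2) → ℤ) (l e : Fin (m+1)) :
    shiftPair i l (evenIdx e) = i (evenIdx e) + if e = l then 1 else 0 := by
  simp only [shiftPair_apply, evenIdx, oddIdx, Fin.ext_iff]
  split_ifs <;> omega

theorem shiftPair_mem {d : ℕ} {i : Fin (2*m+2) → ℤ} (hi : i ∈ Icheck m d) {l : Fin (m+1)}
    (hl : i (evenIdx l) < d - 2) : shiftPair i l ∈ Icheck m d := by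
  obtain ⟨hbd, hpair⟩ := hi
  have hsum : i (evenIdx l) + i (oddIdx l) = d - 2 := hpair l l.isLt
  refine ⟨fun e => ?_, fun k hk => ?_⟩
  · rcases eq_or_ne e (evenIdx l) with rfl | h₁
    · simp only [shiftPair_apply, if_pos, evenIdx_ne_oddIdx, if_false]
      have := hbd (evenIdx l)
      omega
    rcases eq_or_ne e (oddIdx l) with rfl | h₂
    · simp only [shiftPair_apply, (evenIdx_ne_oddIdx l).symm, if_pos, if_false]
      have := hbd (oddIdx l)
      omega
    · simpa [shiftPair_apply, h₁, h₂] using hbd e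
  · have := hpair k hk
    simp only [shiftPair_apply, evenIdx, oddIdx, Fin.ext_iff]
    split_ifs <;> omega

theorem evenSum_shiftPair (i : Fin (2*m+2) → ℤ) (l : Fin (m+1)) :
    evenSum m (shiftPair i l) = evenSum m i + 1 := by
  simp [evenSum, shiftPair, Finset.sum_add_distrib, Finset.sum_sub_distrib,
    Finset.sum_pi_single', evenIdx, oddIdx]

theorem sum_shiftPair_evenIdx (i : Fin (2*m+2) → ℤ) (l : Fin (m+1)) (S : Finset (Fin (m+1))) :
    ∑ e ∈ S, (shiftPair i l ⟨2*e.1, by omega⟩ + 1) =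
      ∑ e ∈ S, (i ⟨2*e.1, by omega⟩ + 1) + if l ∈ S then 1 else 0 := by
  change ∑ e ∈ S, (shiftPair i l (evenIdx e) + 1) = ∑ e ∈ S, (i (evenIdx e) + 1) + _
  simp only [shiftPair_evenIdx, add_right_comm _ _ (1 : ℤ), Finset.sum_add_distrib,
    Finset.sum_ite_eq']

end

theorem sq_eq_one_of_zpow_proportional {K : Type*} [CommGroupWithZero K] {ζ c : K}
    (hζ : ζ ≠ 0) {s t : ℤ} (h₀ : ζ ^ t = c * ζ ^ s) (h₁ : ζ ^ (t + 3) = c * ζ ^ (s + 1)) :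
    ζ ^ 2 = 1 := by
  have h₃ : ζ ^ t * ζ ^ 3 = ζ ^ t * ζ := by
    calc ζ ^ t * ζ ^ 3 = ζ ^ (t + 3) := by rw [zpow_add₀ hζ]; norm_cast
      _ = ζ ^ t * ζ := by rw [h₁, zpow_add_one₀ hζ, h₀, mul_assoc]
  have h₄ : ζ * ζ ^ 2 = ζ * 1 := by
    rw [← pow_succ', mul_one]
    exact mul_left_cancel₀ (zpow_ne_zero t hζ) h₃
  exact mul_left_cancel₀ hζ h₄

/-- The period vectors `q` (of the linear cycle `P^{n/2}` with `a = 0`) and `q'` (of the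
linear cycle with `a = (0,…,0,1,…,1)`, `mp+1` zeros) over `Ǐ` are not proportional, for
`1 ≤ mp ≤ n/2 - 1` and `d ≥ 3`. -/
theorem stmt_17 (m d mp : ℕ) (hd : 3 ≤ d) (hmp2 : mp + 1 ≤ m)
    (ζ : ℂ) (hζ : IsPrimitiveRoot ζ (2*d))
    (q q' : (Fin (2*m+2) → ℤ) → ℂ)
    (hq1 : ∀ i ∈ Icheck m d, q i = ζ ^ (evenSum m i))
    (hq'1 : ∀ i ∈ Icheck m d, q' i = ζ ^
      ((∑ e ∈ Finset.univ.filter (fun e : Fin (m+1) => e.1 ≤ mp),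
          (i ⟨2*e.1, by have := e.isLt; omega⟩ + 1)) +
       3 * ∑ e ∈ Finset.univ.filter (fun e : Fin (m+1) => mp + 1 ≤ e.1),
          (i ⟨2*e.1, by have := e.isLt; omega⟩ + 1))) :
    ¬ ∃ c : ℂ, ∀ i, q' i = c * q i := by
  rintro ⟨c, hc⟩
  let i₀ : Fin (2*m+2) → ℤ := fun e => if Even e.1 then 0 else (d : ℤ) - 2
  let l : Fin (m+1) := Fin.last m
  have hi₀ : i₀ ∈ Icheck m d := by
    refine ⟨fun e => by dsimp [i₀]; split_ifs <;> omega, fun k _ => ?_⟩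
    simp [i₀]
  have hi₁ : shiftPair i₀ l ∈ Icheck m d :=
    shiftPair_mem hi₀ (by simp [i₀, evenIdx]; omega)
  have h₀ := hc i₀
  have h₁ := hc (shiftPair i₀ l)
  rw [hq1 _ hi₀, hq'1 _ hi₀] at h₀
  rw [hq1 _ hi₁, hq'1 _ hi₁, evenSum_shiftPair] at h₁
  rw [sum_shiftPair_evenIdx, sum_shiftPair_evenIdx, if_neg (by simp [l]; omega),
    if_pos (by simp [l]; omega)] at h₁
  have hζ2 := sq_eq_one_of_zpow_proportional (hζ.ne_zero (by omega)) h₀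
    (by rw [← h₁]; ring_nf)
  exact hζ.pow_ne_one_of_pos_of_lt two_ne_zero (by omega) hζ2
end
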